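/- arXiv:2205.04451 — 3 statements merged into one kernel-verified Lean document; each statement's English description precedes it below -/
import Mathlib

section
/- Let α ∈ (0,1), χ_α > 0, l_o > 0 and fix X ∈ ℝ² with X ≠ 0. Define A(ρ) = ∫_0^{ρ/l_o} u^{−α−1} sin(u) du for ρ > 0, and F(X,z) = (χ_α/π²) [ z^{α−1} A(z) − (z² + |X|²)^{(α−1)/2} A(√(z² + |X|²)) ] for z > 0. Then lim_{z→∞} z^{3−α} F(X,z) = C_α (1−α) |X|² / (2π²), where C_α = π χ_α / (2 cos(απ/2) Γ(1+α)). -/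
/-!
Put `g t = t ^ (α - 1) * A t`, so that `F z` is a multiple of `g z - g √(z² + |X|²)`. By the
mean value theorem this difference is `g' ξ * (z - √(z² + |X|²))` for some `ξ` between the two
points, and `z * (√(z² + |X|²) - z) → |X|² / 2`; so everything is governed by
`t ^ (2 - α) * g' t = (α - 1) * A t + (t / l_o) ^ (-α) * sin (t / l_o) → (α - 1) * I`, where
`I = ∫₀^∞ u ^ (-α - 1) * sin u`.

To evaluate `I`, write `u ^ (-α - 1)` and `1 / (t² + 1)` as Laplace transforms: two uses of
Fubini give `Γ(α + 1) * I = ∫₀^∞ t ^ α / (t² + 1) = Γ((1 + α) / 2) * Γ((1 - α) / 2) / 2`, and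
the reflection formula turns the last product into `π / (2 * cos (α * π / 2))`.
-/

open MeasureTheory Real Filter Set Topology

theorem integrableOn_Ioi_zero_of_norm_le_rpow {E : Type*} [NormedAddCommGroup E] {f : ℝ → E}
    {s t : ℝ} (hs : -1 < s) (ht : t < -1) (hf : ContinuousOn f (Ioi 0))
    (h_zero : ∀ x ∈ Ioc (0 : ℝ) 1, ‖f x‖ ≤ x ^ s) (h_top : ∀ x ∈ Ioi (1 : ℝ), ‖f x‖ ≤ x ^ t) :
    IntegrableOn f (Ioi 0) := by
  rw [← Ioc_union_Ioi_eq_Ioi zero_le_one]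
  refine IntegrableOn.union ?_ ?_
  · exact (intervalIntegral.intervalIntegrable_rpow' hs).1.mono'
      ((hf.mono Ioc_subset_Ioi_self).aestronglyMeasurable measurableSet_Ioc)
      ((ae_restrict_mem measurableSet_Ioc).mono h_zero)
  · exact (integrableOn_Ioi_rpow_of_lt ht one_pos).mono'
      ((hf.mono (Ioi_subset_Ioi zero_le_one)).aestronglyMeasurable measurableSet_Ioi)
      ((ae_restrict_mem measurableSet_Ioi).mono h_top)

theorem integrableOn_rpow_mul_sin {s : ℝ} (hs₀ : -2 < s) (hs₁ : s < -1) :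
    IntegrableOn (fun u : ℝ ↦ u ^ s * sin u) (Ioi 0) := by
  have hnorm : ∀ u : ℝ, 0 < u → ‖u ^ s * sin u‖ = u ^ s * |sin u| := fun u hu ↦ by
    rw [norm_mul, norm_of_nonneg (rpow_nonneg hu.le s), norm_eq_abs]
  refine integrableOn_Ioi_zero_of_norm_le_rpow (s := s + 1) (by linarith) hs₁
    (fun u hu ↦ ((continuousAt_rpow_const u s (Or.inl (ne_of_gt hu))).mul
      continuous_sin.continuousAt).continuousWithinAt) (fun u hu ↦ ?_) (fun u hu ↦ ?_)
  · rw [hnorm u hu.1, rpow_add_one hu.1.ne']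
    exact mul_le_mul_of_nonneg_left ((abs_sin_le_abs).trans_eq (abs_of_pos hu.1))
      (rpow_nonneg hu.1.le s)
  · rw [hnorm u (zero_lt_one.trans hu)]
    exact mul_le_of_le_one_right (rpow_nonneg (zero_lt_one.trans hu).le s) (abs_sin_le_one u)

theorem hasDerivAt_integral_rpow_mul_sin {s x : ℝ} (hs₀ : -2 < s) (hs₁ : s < -1) (hx : 0 < x) :
    HasDerivAt (fun y ↦ ∫ u in (0 : ℝ)..y, u ^ s * sin u) (x ^ s * sin x) x := by
  have h_cont : ∀ u : ℝ, 0 < u → ContinuousAt (fun u : ℝ ↦ u ^ s * sin u) u := fun u hu ↦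
    (continuousAt_rpow_const u s (Or.inl hu.ne')).mul continuous_sin.continuousAt
  refine intervalIntegral.integral_hasDerivAt_right ?_
    (ContinuousAt.stronglyMeasurableAtFilter isOpen_Ioi h_cont x hx) (h_cont x hx)
  rw [intervalIntegrable_iff_integrableOn_Ioc_of_le hx.le]
  exact (integrableOn_rpow_mul_sin hs₀ hs₁).mono_set Ioc_subset_Ioi_self

theorem setIntegral_setIntegral_swap_of_continuousOn {f : ℝ → ℝ → ℝ} {s t : Set ℝ}
    (hs : MeasurableSet s) (ht : MeasurableSet t)
    (hf : ContinuousOn (Function.uncurry f) (s ×ˢ t))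
    (h_slice : ∀ x ∈ s, IntegrableOn (f x) t)
    (h_norm : IntegrableOn (fun x ↦ ∫ y in t, ‖f x y‖) s) :
    ∫ x in s, ∫ y in t, f x y = ∫ y in t, ∫ x in s, f x y := by
  have hmeas : AEStronglyMeasurable (Function.uncurry f)
      ((volume.restrict s).prod (volume.restrict t)) := by
    rw [Measure.prod_restrict]
    exact hf.aestronglyMeasurable (hs.prod ht)
  refine integral_integral_swap ((integrable_prod_iff hmeas).mpr ⟨?_, h_norm⟩)
  filter_upwards [ae_restrict_mem hs] using h_slice

theorem integral_exp_neg_mul_mul_sin {b : ℝ} (hb : 0 < b) :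
    ∫ u in Ioi (0 : ℝ), exp (-b * u) * sin u = 1 / (b ^ 2 + 1) := by
  have ha : (-b + Complex.I).re < 0 := by simpa using hb
  have him : ∀ u : ℝ, exp (-b * u) * sin u = (Complex.exp ((-b + Complex.I) * u)).im := by
    intro u
    simp [Complex.exp_im]
  simp_rw [him]
  have h := integral_im (integrableOn_exp_mul_complex_Ioi ha 0)
  simp only [RCLike.im_to_complex] at h
  rw [h, integral_exp_mul_complex_Ioi ha 0]
  simp [Complex.normSq, sq, neg_div]

theorem integral_rpow_mul_exp_neg_mul {q b : ℝ} (hq : -1 < q) (hb : 0 < b) :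
    ∫ t in Ioi (0 : ℝ), t ^ q * exp (-(b * t)) = Gamma (q + 1) * b ^ (-(q + 1)) := by
  have h := integral_rpow_mul_exp_neg_mul_Ioi (a := q + 1) (by linarith) hb
  rw [add_sub_cancel_right, one_div, inv_rpow hb.le, ← rpow_neg hb.le] at h
  rw [h, mul_comm]

theorem Gamma_mul_integral_rpow_mul_sin {α : ℝ} (h0 : 0 < α) (h1 : α < 1) :
    Gamma (α + 1) * ∫ u in Ioi (0 : ℝ), u ^ (-α - 1) * sin u
      = ∫ t in Ioi (0 : ℝ), t ^ α / (t ^ 2 + 1) := by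
  have h_gamma : ∀ u : ℝ, 0 < u →
      ∫ t in Ioi (0 : ℝ), t ^ α * exp (-(u * t)) = Gamma (α + 1) * u ^ (-α - 1) := by
    intro u hu
    rw [integral_rpow_mul_exp_neg_mul (by linarith) hu, neg_add']
  have h_laplace : ∀ t : ℝ, 0 < t →
      ∫ u in Ioi (0 : ℝ), sin u * (t ^ α * exp (-(u * t))) = t ^ α / (t ^ 2 + 1) := by
    intro t ht
    rw [div_eq_mul_one_div, ← integral_exp_neg_mul_mul_sin ht, ← integral_const_mul]
    refine setIntegral_congr_fun measurableSet_Ioi fun u _ ↦ ?_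
    ring_nf
  calc Gamma (α + 1) * ∫ u in Ioi (0 : ℝ), u ^ (-α - 1) * sin u
      = ∫ u in Ioi (0 : ℝ), ∫ t in Ioi (0 : ℝ), sin u * (t ^ α * exp (-(u * t))) := by
        rw [← integral_const_mul]
        refine setIntegral_congr_fun measurableSet_Ioi fun u hu ↦ ?_
        rw [integral_const_mul, h_gamma u hu]
        ring
    _ = ∫ t in Ioi (0 : ℝ), ∫ u in Ioi (0 : ℝ), sin u * (t ^ α * exp (-(u * t))) := by
        refine setIntegral_setIntegral_swap_of_continuousOn measurableSet_Ioi measurableSet_Ioi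
          ?_ (fun u hu ↦ ?_) ?_
        · exact (by fun_prop (disch := exact h0.le) : Continuous _).continuousOn
        · refine Integrable.const_mul ?_ _
          exact (integrableOn_rpow_mul_exp_neg_mul_rpow (p := 1) (by linarith) one_pos hu).congr_fun
            (fun t _ ↦ by simp) measurableSet_Ioi
        · refine IntegrableOn.congr_fun ((integrableOn_rpow_mul_sin (s := -α - 1) (by linarith)
            (by linarith)).norm.const_mul (Gamma (α + 1))) (fun u hu ↦ ?_) measurableSet_Ioi
          have hu : (0 : ℝ) < u := hu
          rw [norm_mul, norm_of_nonneg (rpow_nonneg hu.le _), ← mul_assoc, ← h_gamma u hu,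
            ← integral_mul_const]
          refine setIntegral_congr_fun measurableSet_Ioi fun t ht ↦ ?_
          rw [norm_mul, norm_of_nonneg (mul_nonneg (rpow_nonneg (le_of_lt ht) α) (exp_nonneg _))]
          ring
    _ = ∫ t in Ioi (0 : ℝ), t ^ α / (t ^ 2 + 1) :=
        setIntegral_congr_fun measurableSet_Ioi h_laplace

theorem Gamma_one_add_div_two_mul_Gamma_one_sub_div_two (α : ℝ) :
    Gamma ((1 + α) / 2) * Gamma ((1 - α) / 2) = π / cos (α * π / 2) := by
  rw [show (1 - α) / 2 = 1 - (1 + α) / 2 by ring, Gamma_mul_Gamma_one_sub,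
    show π * ((1 + α) / 2) = α * π / 2 + π / 2 by ring, sin_add_pi_div_two]

theorem integral_rpow_div_sq_add_one {α : ℝ} (h0 : -1 < α) (h1 : α < 1) :
    ∫ t in Ioi (0 : ℝ), t ^ α / (t ^ 2 + 1) = π / (2 * cos (α * π / 2)) := by
  have h_split : ∀ s : ℝ, (fun t : ℝ ↦ t ^ α * exp (-(t ^ 2 + 1) * s))
      = fun t ↦ exp (-s) * (t ^ α * exp (-s * t ^ (2 : ℝ))) := by
    intro s
    ext t
    rw [rpow_two, mul_left_comm, ← exp_add]
    ring_nf
  have h_gauss : ∀ s : ℝ, 0 < s →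
      ∫ t in Ioi (0 : ℝ), t ^ α * exp (-(t ^ 2 + 1) * s)
        = Gamma ((1 + α) / 2) / 2 * (exp (-s) * s ^ ((1 - α) / 2 - 1)) := by
    intro s hs
    rw [h_split, integral_const_mul, integral_rpow_mul_exp_neg_mul_rpow two_pos h0 hs]
    ring_nf
  have h_exp : ∀ t : ℝ, 0 < t →
      ∫ s in Ioi (0 : ℝ), t ^ α * exp (-(t ^ 2 + 1) * s) = t ^ α / (t ^ 2 + 1) := by
    intro t _
    rw [integral_const_mul, integral_exp_mul_Ioi (by nlinarith) 0, mul_zero, exp_zero,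
      neg_div_neg_eq, mul_one_div]
  calc ∫ t in Ioi (0 : ℝ), t ^ α / (t ^ 2 + 1)
      = ∫ t in Ioi (0 : ℝ), ∫ s in Ioi (0 : ℝ), t ^ α * exp (-(t ^ 2 + 1) * s) :=
        (setIntegral_congr_fun measurableSet_Ioi h_exp).symm
    _ = ∫ s in Ioi (0 : ℝ), ∫ t in Ioi (0 : ℝ), t ^ α * exp (-(t ^ 2 + 1) * s) := by
        refine (setIntegral_setIntegral_swap_of_continuousOn measurableSet_Ioi measurableSet_Ioi
          ?_ (fun s hs ↦ ?_) ?_).symm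
        · intro p hp
          exact (by fun_prop (disch := exact Or.inl (ne_of_gt hp.2)) :
            ContinuousAt _ p).continuousWithinAt
        · rw [h_split]
          exact (integrableOn_rpow_mul_exp_neg_mul_rpow h0 two_pos hs).const_mul _
        · refine IntegrableOn.congr_fun
            ((GammaIntegral_convergent (s := (1 - α) / 2) (by linarith)).const_mul
              (Gamma ((1 + α) / 2) / 2)) (fun s hs ↦ ?_) measurableSet_Ioi
          rw [← h_gauss s hs]
          refine setIntegral_congr_fun measurableSet_Ioi fun t ht ↦ ?_
          exact (norm_of_nonneg (mul_nonneg (rpow_nonneg (le_of_lt ht) α) (exp_nonneg _))).symm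
    _ = Gamma ((1 + α) / 2) * Gamma ((1 - α) / 2) / 2 := by
        rw [setIntegral_congr_fun measurableSet_Ioi h_gauss, integral_const_mul,
          ← Gamma_eq_integral (by linarith), div_mul_eq_mul_div]
    _ = π / (2 * cos (α * π / 2)) := by
        rw [Gamma_one_add_div_two_mul_Gamma_one_sub_div_two, div_div, mul_comm]

theorem integral_rpow_neg_sub_one_mul_sin {α : ℝ} (h0 : 0 < α) (h1 : α < 1) :
    ∫ u in Ioi (0 : ℝ), u ^ (-α - 1) * sin u = π / (2 * cos (α * π / 2) * Gamma (1 + α)) := by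
  have hΓ : Gamma (α + 1) ≠ 0 := (Gamma_pos_of_pos (by linarith)).ne'
  rw [add_comm, div_mul_eq_div_div, ← integral_rpow_div_sq_add_one (by linarith) h1,
    ← Gamma_mul_integral_rpow_mul_sin h0 h1, mul_div_cancel_left₀ _ hΓ]

theorem tendsto_sqrt_sq_add_div_self (c : ℝ) :
    Tendsto (fun z : ℝ ↦ √(z ^ 2 + c) / z) atTop (𝓝 1) := by
  have h : Tendsto (fun z : ℝ ↦ √(1 + c * (z ^ 2)⁻¹)) atTop (𝓝 1) := by
    simpa using ((tendsto_pow_atTop two_ne_zero).inv_tendsto_atTop.const_mul c).const_add 1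
      |>.sqrt
  refine h.congr' ?_
  filter_upwards [eventually_gt_atTop 0] with z hz
  rw [← sqrt_sq hz.le, ← sqrt_div' _ (sq_nonneg z), sqrt_sq hz.le]
  congr 1
  field_simp

theorem tendsto_rpow_mul_sub_sqrt_sq_add {g g' : ℝ → ℝ} {p L c : ℝ} (hc : 0 < c)
    (hg : ∀ t, 0 < t → HasDerivAt g (g' t) t)
    (hg' : Tendsto (fun t ↦ t ^ p * g' t) atTop (𝓝 L)) :
    Tendsto (fun z ↦ z ^ (p + 1) * (g √(z ^ 2 + c) - g z)) atTop (𝓝 (L * (c / 2))) := by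
  have h_lt : ∀ z : ℝ, 0 < z → z < √(z ^ 2 + c) := fun z hz ↦
    lt_sqrt_of_sq_lt (by linarith)
  have h_mvt : ∀ z : ℝ, 0 < z → ∃ ξ ∈ Ioo z √(z ^ 2 + c),
      g √(z ^ 2 + c) - g z = g' ξ * (√(z ^ 2 + c) - z) := by
    intro z hz
    obtain ⟨ξ, hξ, h⟩ := exists_hasDerivAt_eq_slope g g' (h_lt z hz)
      (fun t ht ↦ (hg t (hz.trans_le ht.1)).continuousAt.continuousWithinAt)
      (fun t ht ↦ hg t (hz.trans ht.1))
    exact ⟨ξ, hξ, by rw [h, div_mul_cancel₀ _ (sub_pos.mpr (h_lt z hz)).ne']⟩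
  choose! ξ hξ h_eq using h_mvt
  have h_ratio := tendsto_sqrt_sq_add_div_self c
  have h_ξ : Tendsto ξ atTop atTop := tendsto_atTop_mono' atTop
    (by filter_upwards [eventually_gt_atTop 0] with z hz using (hξ z hz).1.le) tendsto_id
  have h_z_div_ξ : Tendsto (fun z ↦ z / ξ z) atTop (𝓝 1) := by
    refine tendsto_of_tendsto_of_tendsto_of_le_of_le' (by simpa using h_ratio.inv₀ one_ne_zero)
      tendsto_const_nhds ?_ ?_
    all_goals filter_upwards [eventually_gt_atTop 0] with z hz
    · exact div_le_div_of_nonneg_left hz.le (hz.trans (hξ z hz).1) (hξ z hz).2.le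
    · exact div_le_one_of_le₀ (hξ z hz).1.le (hz.trans (hξ z hz).1).le
  have h_gap : Tendsto (fun z ↦ z * (√(z ^ 2 + c) - z)) atTop (𝓝 (c / 2)) := by
    have h : Tendsto (fun z ↦ c / (√(z ^ 2 + c) / z + 1)) atTop (𝓝 (c / (1 + 1))) :=
      tendsto_const_nhds.div (h_ratio.add_const 1) (by norm_num)
    rw [one_add_one_eq_two] at h
    refine h.congr' ?_
    filter_upwards [eventually_gt_atTop 0] with z hz
    have hs : √(z ^ 2 + c) ^ 2 = z ^ 2 + c := sq_sqrt (by positivity)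
    field_simp
    linear_combination -hs
  have h_lim := ((hg'.comp h_ξ).mul (h_z_div_ξ.rpow_const (p := p) (Or.inl one_ne_zero))).mul h_gap
  rw [one_rpow, mul_one] at h_lim
  refine h_lim.congr' ?_
  filter_upwards [eventually_gt_atTop 0] with z hz
  have hξ0 : 0 < ξ z := hz.trans (hξ z hz).1
  rw [h_eq z hz, Function.comp_apply, div_rpow hz.le hξ0.le, rpow_add_one hz.ne']
  field_simp

theorem tendsto_rpow_mul_sub_of_eq_integral {α lo c : ℝ} {A : ℝ → ℝ} (h0 : 0 < α) (h1 : α < 1)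
    (hlo : 0 < lo) (hA : ∀ ρ : ℝ, 0 < ρ → A ρ = ∫ u in (0 : ℝ)..(ρ / lo), u ^ (-α - 1) * sin u)
    (hc : 0 < c) :
    Tendsto (fun z ↦ z ^ (3 - α) * (z ^ (α - 1) * A z - √(z ^ 2 + c) ^ (α - 1) * A √(z ^ 2 + c)))
      atTop (𝓝 ((1 - α) * (∫ u in Ioi (0 : ℝ), u ^ (-α - 1) * sin u) * (c / 2))) := by
  set I := ∫ u in Ioi (0 : ℝ), u ^ (-α - 1) * sin u
  have hA' : ∀ t : ℝ, 0 < t → HasDerivAt A ((t / lo) ^ (-α - 1) * sin (t / lo) * (1 / lo)) t :=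
    fun t ht ↦ ((hasDerivAt_integral_rpow_mul_sin (s := -α - 1) (by linarith) (by linarith)
      (div_pos ht hlo)).comp t ((hasDerivAt_id' t).div_const lo)).congr_of_eventuallyEq
      (eventually_of_mem (isOpen_Ioi.mem_nhds ht) fun ρ hρ ↦ by rw [hA ρ hρ]; rfl)
  set g' : ℝ → ℝ := fun t ↦ (α - 1) * t ^ (α - 1 - 1) * A t
    + t ^ (α - 1) * ((t / lo) ^ (-α - 1) * sin (t / lo) * (1 / lo)) with hg'
  have hg : ∀ t : ℝ, 0 < t → HasDerivAt (fun t ↦ t ^ (α - 1) * A t) (g' t) t := fun t ht ↦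
    (hasDerivAt_rpow_const (Or.inl ht.ne')).mul (hA' t ht)
  have hA_lim : Tendsto A atTop (𝓝 I) := by
    refine (intervalIntegral_tendsto_integral_Ioi 0
      (integrableOn_rpow_mul_sin (by linarith) (by linarith))
      (tendsto_id.atTop_div_const hlo)).congr' ?_
    filter_upwards [eventually_gt_atTop 0] with t ht using (hA t ht).symm
  have h_osc : Tendsto (fun t ↦ (t / lo) ^ (-α) * sin (t / lo)) atTop (𝓝 0) :=
    ((tendsto_rpow_neg_atTop h0).zero_mul_isBoundedUnder_le
      (isBoundedUnder_of ⟨1, fun x ↦ by simpa using abs_sin_le_one x⟩)).comp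
      (tendsto_id.atTop_div_const hlo)
  have h_deriv : Tendsto (fun t ↦ t ^ (2 - α) * g' t) atTop (𝓝 ((α - 1) * I)) := by
    have h := (hA_lim.const_mul (α - 1)).add h_osc
    rw [add_zero] at h
    refine h.congr' ?_
    filter_upwards [eventually_gt_atTop 0] with t ht
    have e1 : t ^ (2 - α) * t ^ (α - 1 - 1) = 1 := by
      rw [← rpow_add ht, show 2 - α + (α - 1 - 1) = 0 by ring, rpow_zero]
    have e2 : t ^ (2 - α) * t ^ (α - 1) = t := by
      rw [← rpow_add ht, show 2 - α + (α - 1) = 1 by ring, rpow_one]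
    have e3 : (t / lo) ^ (-α) = (t / lo) ^ (-α - 1) * (t / lo) := by
      rw [← rpow_add_one (div_pos ht hlo).ne', sub_add_cancel]
    rw [hg']
    linear_combination sin (t / lo) * e3 - (α - 1) * A t * e1
      - ((t / lo) ^ (-α - 1) * sin (t / lo) / lo) * e2
  have h_diff := tendsto_rpow_mul_sub_sqrt_sq_add hc hg h_deriv
  rw [show 2 - α + 1 = 3 - α by ring] at h_diff
  convert h_diff.neg using 2 <;> ring

theorem stmt3_general (α χ lo : ℝ) (h0 : 0 < α) (h1 : α < 1) (hlo : 0 < lo)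
    (X : EuclideanSpace ℝ (Fin 2)) (hX : X ≠ 0)
    (A F : ℝ → ℝ)
    (hA : ∀ ρ : ℝ, 0 < ρ → A ρ = ∫ u in (0:ℝ)..(ρ / lo), u ^ (-α - 1) * Real.sin u)
    (hF : ∀ z : ℝ, 0 < z → F z = (χ / π ^ 2) *
      (z ^ (α - 1) * A z -
        (z ^ 2 + ‖X‖ ^ 2) ^ ((α - 1) / 2) * A (Real.sqrt (z ^ 2 + ‖X‖ ^ 2)))) :
    Tendsto (fun z : ℝ => z ^ (3 - α) * F z) atTop
      (nhds ((π * χ / (2 * Real.cos (α * π / 2) * Real.Gamma (1 + α))) *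
        (1 - α) * ‖X‖ ^ 2 / (2 * π ^ 2))) := by
  have hc : 0 < ‖X‖ ^ 2 := pow_pos (norm_pos_iff.mpr hX) 2
  have h := (tendsto_rpow_mul_sub_of_eq_integral h0 h1 hlo hA hc).const_mul (χ / π ^ 2)
  rw [integral_rpow_neg_sub_one_mul_sin h0 h1] at h
  convert h.congr' ?_ using 2
  · ring
  filter_upwards [eventually_gt_atTop 0] with z hz
  have h_sqrt : √(z ^ 2 + ‖X‖ ^ 2) ^ (α - 1) = (z ^ 2 + ‖X‖ ^ 2) ^ ((α - 1) / 2) := by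
    rw [sqrt_eq_rpow, ← rpow_mul (by positivity)]
    ring_nf
  rw [hF z hz, h_sqrt]
  ring

/-- Let `α ∈ (0,1)`, `χ_α > 0`, `l_o > 0`, `X ∈ ℝ²` with `X ≠ 0`.
With `A(ρ) = ∫_0^{ρ/l_o} u^{-α-1} sin u du` (for `ρ > 0`) and
`F(z) = (χ_α/π²)[z^{α-1} A(z) - (z² + |X|²)^{(α-1)/2} A(√(z²+|X|²))]` (for `z > 0`),
one has `lim_{z→∞} z^{3-α} F(z) = C_α (1-α)|X|²/(2π²)`,
where `C_α = π χ_α/(2 cos(απ/2) Γ(1+α))`. -/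
theorem stmt3 (α χ lo : ℝ) (h0 : 0 < α) (h1 : α < 1) (hχ : 0 < χ) (hlo : 0 < lo)
    (X : EuclideanSpace ℝ (Fin 2)) (hX : X ≠ 0)
    (A F : ℝ → ℝ)
    (hA : ∀ ρ : ℝ, 0 < ρ → A ρ = ∫ u in (0:ℝ)..(ρ / lo), u ^ (-α - 1) * Real.sin u)
    (hF : ∀ z : ℝ, 0 < z → F z = (χ / π ^ 2) *
      (z ^ (α - 1) * A z -
        (z ^ 2 + ‖X‖ ^ 2) ^ ((α - 1) / 2) * A (Real.sqrt (z ^ 2 + ‖X‖ ^ 2)))) :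
    Tendsto (fun z : ℝ => z ^ (3 - α) * F z) atTop
      (nhds ((π * χ / (2 * Real.cos (α * π / 2) * Real.Gamma (1 + α))) *
        (1 - α) * ‖X‖ ^ 2 / (2 * π ^ 2))) :=
  stmt3_general α χ lo h0 h1 hlo X hX A F hA hF
end

section
/- For α ∈ (0,2), define Ψ_α: ℝ² → ℝ by Ψ_α(ξ) = (1/(2π)²) ∫_{ℝ²} cos(η·ξ) e^{−|η|^α/4} dη. Then Ψ_α(0) = 2^{4/α} Γ(2/α) / (2πα), and lim_{ξ→0, ξ≠0} ( Ψ_α(0) − Ψ_α(ξ) ) / |ξ|² = Ψ_α(0) · q_α, where q_α = 2^{4/α−2} Γ(4/α) / Γ(2/α). -/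
/-!
`Ψ_α(0)` is a radial integral: in polar coordinates the substitution `t = r^α / 4` turns it
into a Gamma value. For the behaviour at `0`, write
`Ψ_α(0) - Ψ_α(ξ) = (2π)⁻² ∫ (1 - cos ⟪η, ξ⟫) w(η) dη` with `w(η) = exp (-‖η‖^α / 4)`. Since `w`
has finite moments of every order, the Taylor bound `|1 - cos u - u² / 2| ≤ u⁴` replaces
`1 - cos ⟪η, ξ⟫` by `⟪η, ξ⟫² / 2` up to `O(‖ξ‖⁴)`, and rotation invariance of `w` in the plane
gives `∫ ⟪η, ξ⟫² w = ‖ξ‖² / 2 · ∫ ‖η‖² w`. The limit is thus a quotient of two radial moments,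
i.e. of two Gamma values.
-/

open MeasureTheory Real Filter Metric Module Set Topology
open scoped RealInnerProductSpace EuclideanSpace

theorem abs_cos_sub_one_sub_sq_div_two_le (u : ℝ) : |cos u - (1 - u ^ 2 / 2)| ≤ u ^ 4 := by
  rw [abs_of_nonneg (sub_nonneg.2 (one_sub_sq_div_two_le_cos (x := u)))]
  rcases le_or_gt |u| 1 with hu | hu
  · have h := (abs_le.1 (cos_bound hu)).2
    rw [pow_abs, abs_of_nonneg (by positivity)] at h
    nlinarith [pow_nonneg (sq_nonneg u) 2]
  · have hu2 : 1 ≤ u ^ 2 := by nlinarith [abs_nonneg u, sq_abs u]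
    nlinarith [cos_le_one u]

section RadialMoments

variable {E : Type*} [NormedAddCommGroup E] [NormedSpace ℝ E] [FiniteDimensional ℝ E]
  [MeasurableSpace E] [BorelSpace E] [Nontrivial E] (μ : Measure E) [μ.IsAddHaarMeasure]
  {α b : ℝ}

theorem integral_norm_pow_mul_exp_neg_mul_norm_rpow (hα : 0 < α) (hb : 0 < b) (k : ℕ) :
    ∫ x, ‖x‖ ^ k * exp (-b * ‖x‖ ^ α) ∂μ = finrank ℝ E * μ.real (ball 0 1) *
      (b ^ (-((finrank ℝ E + k : ℕ) : ℝ) / α) * (1 / α) *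
        Gamma ((finrank ℝ E + k : ℕ) / α)) := by
  have hn := finrank_pos (R := ℝ) (M := E)
  have hradial : ∫ r in Ioi (0 : ℝ), r ^ (finrank ℝ E - 1) • (r ^ k * exp (-b * r ^ α)) =
      ∫ r in Ioi (0 : ℝ), r ^ ((finrank ℝ E + k - 1 : ℕ) : ℝ) * exp (-b * r ^ α) := by
    refine setIntegral_congr_fun measurableSet_Ioi fun r _ => ?_
    rw [rpow_natCast, smul_eq_mul, ← mul_assoc, ← pow_add]
    congr 2
    omega
  rw [integral_fun_norm_addHaar μ (fun r => r ^ k * exp (-b * r ^ α)), hradial,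
    integral_rpow_mul_exp_neg_mul_rpow hα (neg_one_lt_zero.trans_le (Nat.cast_nonneg _)) hb,
    nsmul_eq_mul, smul_eq_mul]
  have hcast : ((finrank ℝ E + k - 1 : ℕ) : ℝ) + 1 = ((finrank ℝ E + k : ℕ) : ℝ) := by
    rw [Nat.cast_sub (by omega)]; ring
  rw [hcast]
  ring

theorem integrable_norm_pow_mul_exp_neg_mul_norm_rpow (hα : 0 < α) (hb : 0 < b) (k : ℕ) :
    Integrable (fun x => ‖x‖ ^ k * exp (-b * ‖x‖ ^ α)) μ := by
  -- the integral computed above is positive, and a non-integrable function has integral `0`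
  refine .of_integral_ne_zero ?_
  rw [integral_norm_pow_mul_exp_neg_mul_norm_rpow μ hα hb k]
  have : 0 < μ.real (ball 0 1) :=
    ENNReal.toReal_pos (measure_ball_pos μ 0 one_pos).ne' measure_ball_lt_top.ne
  have : 0 < Gamma ((finrank ℝ E + k : ℕ) / α) := Gamma_pos_of_pos
    (div_pos (Nat.cast_pos.2 (Nat.add_pos_left finrank_pos k)) hα)
  have : (0 : ℝ) < finrank ℝ E := Nat.cast_pos.2 finrank_pos
  positivity

end RadialMoments

theorem real_inner_sq_le_norm_sq_mul_norm_sq {E : Type*} [NormedAddCommGroup E]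
    [InnerProductSpace ℝ E] (x ξ : E) : ⟪x, ξ⟫ ^ 2 ≤ ‖x‖ ^ 2 * ‖ξ‖ ^ 2 := by
  rw [← mul_pow, ← sq_abs]
  exact pow_le_pow_left₀ (abs_nonneg _) (abs_real_inner_le_norm x ξ) 2

section InnerMoments

variable {E : Type*} [NormedAddCommGroup E] [InnerProductSpace ℝ E] [MeasurableSpace E]
  [OpensMeasurableSpace E] {μ : Measure E} {w : E → ℝ}

theorem integrable_inner_sq_mul (hw : AEStronglyMeasurable w μ)
    (hw2 : Integrable (fun x => ‖x‖ ^ 2 * w x) μ) (ξ : E) :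
    Integrable (fun x => ⟪x, ξ⟫ ^ 2 * w x) μ := by
  refine (hw2.const_mul (‖ξ‖ ^ 2)).mono
    (((continuous_id.inner continuous_const).pow 2).aestronglyMeasurable.mul hw) ?_
  filter_upwards with x
  simp only [norm_mul, norm_pow, Real.norm_eq_abs, sq_abs, abs_norm]
  rw [← mul_assoc, mul_comm (‖ξ‖ ^ 2)]
  exact mul_le_mul_of_nonneg_right (real_inner_sq_le_norm_sq_mul_norm_sq x ξ) (abs_nonneg _)

theorem MeasureTheory.Integrable.cos_inner_mul (hw : Integrable w μ) (ξ : E) :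
    Integrable (fun x => cos ⟪x, ξ⟫ * w x) μ :=
  hw.bdd_mul (continuous_cos.comp (continuous_id.inner continuous_const)).aestronglyMeasurable
    (ae_of_all _ fun _ => abs_cos_le_one _)

theorem abs_integral_one_sub_cos_inner_sub_le (hw0 : ∀ x, 0 ≤ w x) (hw : Integrable w μ)
    (hw2 : Integrable (fun x => ‖x‖ ^ 2 * w x) μ) (hw4 : Integrable (fun x => ‖x‖ ^ 4 * w x) μ)
    (ξ : E) :
    |∫ x, (1 - cos ⟪x, ξ⟫) * w x ∂μ - (∫ x, ⟪x, ξ⟫ ^ 2 * w x ∂μ) / 2| ≤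
      ‖ξ‖ ^ 4 * ∫ x, ‖x‖ ^ 4 * w x ∂μ := by
  have hone : Integrable (fun x => (1 - cos ⟪x, ξ⟫) * w x) μ :=
    (hw.sub (hw.cos_inner_mul ξ)).congr
      (ae_of_all _ fun x => by simp only [Pi.sub_apply]; ring)
  have hsq := integrable_inner_sq_mul hw.aestronglyMeasurable hw2 ξ
  have hsplit : ∫ x, (1 - cos ⟪x, ξ⟫) * w x ∂μ - (∫ x, ⟪x, ξ⟫ ^ 2 * w x ∂μ) / 2 =
      -∫ x, (cos ⟪x, ξ⟫ - (1 - ⟪x, ξ⟫ ^ 2 / 2)) * w x ∂μ := by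
    rw [← integral_div, ← integral_sub hone (hsq.div_const 2), ← integral_neg]
    congr 1; ext x; ring
  rw [hsplit, abs_neg, ← Real.norm_eq_abs, ← integral_const_mul]
  refine norm_integral_le_of_norm_le (hw4.const_mul _) (ae_of_all _ fun x => ?_)
  rw [norm_mul, Real.norm_eq_abs, Real.norm_eq_abs, abs_of_nonneg (hw0 x)]
  calc |cos ⟪x, ξ⟫ - (1 - ⟪x, ξ⟫ ^ 2 / 2)| * w x ≤ (⟪x, ξ⟫ ^ 2) ^ 2 * w x := by
        rw [← pow_mul]
        exact mul_le_mul_of_nonneg_right (abs_cos_sub_one_sub_sq_div_two_le _) (hw0 x)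
    _ ≤ (‖x‖ ^ 2 * ‖ξ‖ ^ 2) ^ 2 * w x := by
        gcongr
        · exact hw0 x
        · exact real_inner_sq_le_norm_sq_mul_norm_sq x ξ
    _ = ‖ξ‖ ^ 4 * (‖x‖ ^ 4 * w x) := by ring

end InnerMoments

theorem tendsto_div_norm_sq_of_abs_sub_le {F : Type*} [NormedAddCommGroup F] {g : F → ℝ}
    {L C : ℝ} (h : ∀ ξ, |g ξ - ‖ξ‖ ^ 2 * L| ≤ C * ‖ξ‖ ^ 4) :
    Tendsto (fun ξ => g ξ / ‖ξ‖ ^ 2) (𝓝[≠] 0) (𝓝 L) := by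
  have hC : Tendsto (fun ξ : F => C * ‖ξ‖ ^ 2) (𝓝[≠] 0) (𝓝 0) := by
    have hcont : Continuous fun ξ : F => C * ‖ξ‖ ^ 2 := by fun_prop
    simpa using (hcont.tendsto 0).mono_left nhdsWithin_le_nhds
  refine tendsto_sub_nhds_zero_iff.1 (squeeze_zero_norm' ?_ hC)
  filter_upwards [self_mem_nhdsWithin] with ξ (hξ : ξ ≠ 0)
  have hpos : 0 < ‖ξ‖ ^ 2 := by positivity
  rw [Real.norm_eq_abs, show g ξ / ‖ξ‖ ^ 2 - L = (g ξ - ‖ξ‖ ^ 2 * L) / ‖ξ‖ ^ 2 by field_simp,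
    abs_div, abs_of_pos hpos, div_le_iff₀ hpos]
  linarith [h ξ]

section TwoDim

attribute [local instance] FiniteDimensional.of_fact_finrank_eq_two

variable {E : Type*} [NormedAddCommGroup E] [InnerProductSpace ℝ E] [Fact (finrank ℝ E = 2)]
  [MeasurableSpace E] [BorelSpace E] {g : ℝ → ℝ}

theorem integral_inner_sq_mul_radial_of_finrank_eq_two
    (hg : AEStronglyMeasurable (fun x : E => g ‖x‖) volume)
    (hg2 : Integrable (fun x : E => ‖x‖ ^ 2 * g ‖x‖)) (ξ : E) :
    ∫ x, ⟪x, ξ⟫ ^ 2 * g ‖x‖ = ‖ξ‖ ^ 2 / 2 * ∫ x : E, ‖x‖ ^ 2 * g ‖x‖ := by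
  let o : Orientation ℝ E (Fin 2) := (finBasisOfFinrankEq ℝ E Fact.out).orientation
  let J := o.rightAngleRotation
  have hparseval : ∀ x, ⟪x, ξ⟫ ^ 2 + ⟪x, J ξ⟫ ^ 2 = ‖ξ‖ ^ 2 * ‖x‖ ^ 2 := fun x => by
    rw [o.inner_rightAngleRotation_right, neg_sq, mul_comm]
    exact o.inner_sq_add_areaForm_sq x ξ
  have hrot : ∫ x, ⟪x, J ξ⟫ ^ 2 * g ‖x‖ = ∫ x, ⟪x, ξ⟫ ^ 2 * g ‖x‖ := by
    rw [← J.measurePreserving.integral_comp J.toHomeomorph.measurableEmbedding]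
    simp only [LinearIsometryEquiv.norm_map, J, o.inner_comp_rightAngleRotation]
  have hsum :=
    integral_add (integrable_inner_sq_mul hg hg2 ξ) (integrable_inner_sq_mul hg hg2 (J ξ))
  rw [hrot] at hsum
  simp_rw [← add_mul, hparseval, mul_assoc, integral_const_mul] at hsum
  linarith

theorem tendsto_integral_one_sub_cos_inner_mul_div_norm_sq (hg0 : ∀ r, 0 ≤ g r)
    (hg : Integrable (fun x : E => g ‖x‖))
    (hg2 : Integrable (fun x : E => ‖x‖ ^ 2 * g ‖x‖))
    (hg4 : Integrable (fun x : E => ‖x‖ ^ 4 * g ‖x‖)) :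
    Tendsto (fun ξ : E => (∫ x, (1 - cos ⟪x, ξ⟫) * g ‖x‖) / ‖ξ‖ ^ 2) (𝓝[≠] 0)
      (𝓝 ((∫ x : E, ‖x‖ ^ 2 * g ‖x‖) / 4)) := by
  refine tendsto_div_norm_sq_of_abs_sub_le (C := ∫ x : E, ‖x‖ ^ 4 * g ‖x‖) fun ξ => ?_
  have h := abs_integral_one_sub_cos_inner_sub_le (fun x => hg0 ‖x‖) hg hg2 hg4 ξ
  rw [integral_inner_sq_mul_radial_of_finrank_eq_two hg.aestronglyMeasurable hg2 ξ] at h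
  rw [mul_comm (∫ x : E, ‖x‖ ^ 4 * g ‖x‖)]
  convert h using 3
  ring

end TwoDim

theorem integral_norm_pow_mul_exp_neg_norm_rpow_div_four {α : ℝ} (hα : 0 < α) (k : ℕ) :
    ∫ η : EuclideanSpace ℝ (Fin 2), ‖η‖ ^ k * exp (-‖η‖ ^ α / 4) =
      2 * π / α * 2 ^ (2 * (k + 2) / α) * Gamma ((k + 2) / α) := by
  simp_rw [show ∀ r : ℝ, -r ^ α / 4 = -4⁻¹ * r ^ α from fun r => by ring]
  rw [integral_norm_pow_mul_exp_neg_mul_norm_rpow _ hα (by norm_num) k,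
    finrank_euclideanSpace_fin, measureReal_def, EuclideanSpace.volume_ball_fin_two]
  have hquarter : (4⁻¹ : ℝ) ^ (-((2 + k : ℕ) : ℝ) / α) = 2 ^ (2 * (k + 2) / α) := by
    rw [show (4⁻¹ : ℝ) = (2 ^ (2 : ℝ))⁻¹ by norm_num, inv_rpow (by positivity),
      ← rpow_mul (by norm_num), ← rpow_neg (by positivity)]
    congr 1; push_cast; ring
  simp only [hquarter, ENNReal.ofReal_one, one_pow, one_mul, ENNReal.toReal_ofReal pi_pos.le]
  push_cast
  rw [add_comm (2 : ℝ)]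
  ring

theorem stmt13_general (α : ℝ) (h0 : 0 < α)
    (Ψ : EuclideanSpace ℝ (Fin 2) → ℝ)
    (hΨ : ∀ ξ, Ψ ξ = (1 / (2 * π) ^ 2) * ∫ η : EuclideanSpace ℝ (Fin 2),
      Real.cos ⟪η, ξ⟫ * Real.exp (-‖η‖ ^ α / 4)) :
    Ψ 0 = 2 ^ (4 / α) * Real.Gamma (2 / α) / (2 * π * α) ∧
    Tendsto (fun ξ : EuclideanSpace ℝ (Fin 2) => (Ψ 0 - Ψ ξ) / ‖ξ‖ ^ 2)
      (nhdsWithin 0 {(0 : EuclideanSpace ℝ (Fin 2))}ᶜ)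
      (nhds (Ψ 0 * (2 ^ (4 / α - 2) * Real.Gamma (4 / α) / Real.Gamma (2 / α)))) := by
  have hint (k : ℕ) :
      Integrable fun η : EuclideanSpace ℝ (Fin 2) => ‖η‖ ^ k * exp (-‖η‖ ^ α / 4) := by
    simpa only [show ∀ r : ℝ, -4⁻¹ * r ^ α = -r ^ α / 4 from fun r => by ring] using
      integrable_norm_pow_mul_exp_neg_mul_norm_rpow (volume : Measure (EuclideanSpace ℝ (Fin 2)))
        h0 (by norm_num : (0 : ℝ) < 4⁻¹) k
  have hw : Integrable fun η : EuclideanSpace ℝ (Fin 2) => exp (-‖η‖ ^ α / 4) := by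
    simpa using hint 0
  have hΨ0 : Ψ 0 = 2 ^ (4 / α) * Real.Gamma (2 / α) / (2 * π * α) := by
    have h := integral_norm_pow_mul_exp_neg_norm_rpow_div_four h0 0
    simp only [pow_zero, one_mul, Nat.cast_zero, zero_add] at h
    rw [hΨ 0]
    simp only [inner_zero_right, cos_zero, one_mul, h, show 2 * 2 / α = 4 / α by ring]
    field_simp
  have hΨsub (ξ) : Ψ 0 - Ψ ξ =
      (∫ η, (1 - cos ⟪η, ξ⟫) * exp (-‖η‖ ^ α / 4)) / (2 * π) ^ 2 := by
    simp only [sub_mul, one_mul]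
    rw [integral_sub hw (hw.cos_inner_mul ξ), hΨ 0, hΨ ξ]
    simp only [inner_zero_right, cos_zero, one_mul]
    ring
  have hlimit : Ψ 0 * (2 ^ (4 / α - 2) * Real.Gamma (4 / α) / Real.Gamma (2 / α)) =
      (∫ η : EuclideanSpace ℝ (Fin 2), ‖η‖ ^ 2 * exp (-‖η‖ ^ α / 4)) / 4 / (2 * π) ^ 2 := by
    have hΓ : 0 < Gamma (2 / α) := Gamma_pos_of_pos (by positivity)
    rw [hΨ0, integral_norm_pow_mul_exp_neg_norm_rpow_div_four h0 2, rpow_sub two_pos,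
      show 2 * ((2 : ℕ) + 2 : ℝ) / α = 4 / α + 4 / α by push_cast; ring, rpow_add two_pos,
      show ((2 : ℕ) + 2 : ℝ) / α = 4 / α by push_cast; ring]
    field_simp
    norm_num
  refine ⟨hΨ0, hlimit ▸ ?_⟩
  refine ((tendsto_integral_one_sub_cos_inner_mul_div_norm_sq
    (g := fun r => exp (-r ^ α / 4)) (fun r => (exp_pos _).le) hw (hint 2) (hint 4)).div_const
      ((2 * π) ^ 2)).congr fun ξ => ?_
  rw [hΨsub]
  ring

/-- For `α ∈ (0,2)` let
`Ψ_α(ξ) = (1/(2π)²) ∫_{ℝ²} cos(η·ξ) e^{-|η|^α/4} dη`. Then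
`Ψ_α(0) = 2^{4/α} Γ(2/α)/(2πα)` and
`lim_{ξ→0, ξ≠0} (Ψ_α(0) - Ψ_α(ξ))/|ξ|² = Ψ_α(0) q_α` with
`q_α = 2^{4/α-2} Γ(4/α)/Γ(2/α)`. -/
theorem stmt13 (α : ℝ) (h0 : 0 < α) (h2 : α < 2)
    (Ψ : EuclideanSpace ℝ (Fin 2) → ℝ)
    (hΨ : ∀ ξ, Ψ ξ = (1 / (2 * π) ^ 2) * ∫ η : EuclideanSpace ℝ (Fin 2),
      Real.cos ⟪η, ξ⟫ * Real.exp (-‖η‖ ^ α / 4)) :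
    Ψ 0 = 2 ^ (4 / α) * Real.Gamma (2 / α) / (2 * π * α) ∧
    Tendsto (fun ξ : EuclideanSpace ℝ (Fin 2) => (Ψ 0 - Ψ ξ) / ‖ξ‖ ^ 2)
      (nhdsWithin 0 {(0 : EuclideanSpace ℝ (Fin 2))}ᶜ)
      (nhds (Ψ 0 * (2 ^ (4 / α - 2) * Real.Gamma (4 / α) / Real.Gamma (2 / α)))) :=
  stmt13_general α h0 Ψ hΨ
end

section
/- Let α ∈ (0,1), χ_α > 0, l_o > 0, and define c: ℝ → ℝ by c(0) = χ_α / (2π² (1−α) l_o^{1−α}) and, for w ≠ 0, c(w) = (χ_α/(2π²)) |w|^{α−1} ∫_0^{|w|/l_o} u^{−α−1} sin(u) du. Then c is not Lebesgue integrable on ℝ. -/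
/-!
For `T ≥ π` the integral `F(T) = ∫₀ᵀ u^(-α-1) sin u du` is bounded below by
`(π - 2) π^(-α-1) > 0`: Jordan's inequality `sin u ≥ 2u/π` gives `∫₀^{π/2} ≥ π · π^(-α-1)`,
the integrand is nonnegative on `[π/2, π]`, and integrating by parts bounds the oscillating tail
`∫_π^T` by `2 π^(-α-1)`, as for any decreasing nonnegative weight. Hence `c(w) ≥ K w^(α-1)` with
`K > 0` for `w ≥ π l_o`, and `w^(α-1)` is not integrable at infinity since `α - 1 > -1`.
-/

open MeasureTheory Real Set

theorem abs_integral_mul_sin_le_of_deriv_nonpos {f f' : ℝ → ℝ} {a b : ℝ} (hab : a ≤ b)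
    (hf : ∀ x ∈ Icc a b, HasDerivAt f (f' x) x) (hf' : IntervalIntegrable f' volume a b)
    (hf'_nonpos : ∀ x ∈ Icc a b, f' x ≤ 0) (hfb : 0 ≤ f b) :
    |∫ x in a..b, f x * sin x| ≤ 2 * f a := by
  rw [← uIcc_of_le hab] at hf
  have hcos (x : ℝ) (_ : x ∈ uIcc a b) : HasDerivAt (fun y => -cos y) (sin x) x := by
    simpa using (hasDerivAt_cos x).fun_neg
  have hvar : |∫ x in a..b, f' x * -cos x| ≤ f a - f b := by
    rw [← neg_sub, ← intervalIntegral.integral_eq_sub_of_hasDerivAt hf hf',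
      ← intervalIntegral.integral_neg, ← Real.norm_eq_abs]
    refine intervalIntegral.norm_integral_le_of_norm_le hab (.of_forall fun x hx => ?_) hf'.neg
    have hx' := hf'_nonpos x (Ioc_subset_Icc_self hx)
    rw [norm_mul, norm_neg, Real.norm_eq_abs, abs_of_nonpos hx']
    exact mul_le_of_le_one_right (neg_nonneg.2 hx') (abs_cos_le_one x)
  have hfa : 0 ≤ f a := by linarith [abs_nonneg (∫ x in a..b, f' x * -cos x)]
  have hbound (y : ℝ) (hy : 0 ≤ f y) : |f y * -cos y| ≤ f y := by
    rw [abs_mul, abs_neg, abs_of_nonneg hy]; exact mul_le_of_le_one_right hy (abs_cos_le_one y)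
  rw [intervalIntegral.integral_mul_deriv_eq_deriv_mul hf hcos hf'
    (continuous_sin.intervalIntegrable _ _)]
  linarith [abs_sub (f b * -cos b - f a * -cos a) (∫ x in a..b, f' x * -cos x),
    abs_sub (f b * -cos b) (f a * -cos a), hbound a hfa, hbound b hfb]

theorem intervalIntegrable_rpow_mul_sin {s a b : ℝ} (hs : -2 < s) (ha : 0 ≤ a) (hb : 0 ≤ b) :
    IntervalIntegrable (fun u => u ^ s * sin u) volume a b := by
  refine (intervalIntegral.intervalIntegrable_rpow' (r := s + 1) (by linarith)).mono_fun
    (by fun_prop) ((ae_restrict_mem measurableSet_uIoc).mono fun u hu => ?_)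
  have hu : 0 < u := (le_min ha hb).trans_lt hu.1
  change ‖u ^ s * sin u‖ ≤ ‖u ^ (s + 1)‖
  rw [norm_mul, Real.norm_of_nonneg (rpow_nonneg hu.le _),
    Real.norm_of_nonneg (rpow_nonneg hu.le _), rpow_add_one hu.ne', Real.norm_eq_abs]
  exact mul_le_mul_of_nonneg_left (abs_sin_le_abs.trans_eq (abs_of_pos hu)) (rpow_nonneg hu.le _)

theorem abs_integral_rpow_mul_sin_le {s a b : ℝ} (hs : s ≤ 0) (ha : 0 < a) (hab : a ≤ b) :
    |∫ u in a..b, u ^ s * sin u| ≤ 2 * a ^ s := by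
  have hpos (x : ℝ) (hx : x ∈ Icc a b) : 0 < x := ha.trans_le hx.1
  refine abs_integral_mul_sin_le_of_deriv_nonpos hab
    (fun x hx => hasDerivAt_rpow_const (Or.inl (hpos x hx).ne')) ?_
    (fun x hx => mul_nonpos_of_nonpos_of_nonneg hs (rpow_nonneg (hpos x hx).le _))
    (rpow_nonneg (ha.le.trans hab) _)
  refine ContinuousOn.intervalIntegrable fun x hx => ?_
  rw [uIcc_of_le hab] at hx
  exact (continuousAt_const.mul
    (continuousAt_rpow_const _ _ (Or.inl (hpos x hx).ne'))).continuousWithinAt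

theorem pi_mul_rpow_le_integral_rpow_mul_sin {s : ℝ} (hs2 : -2 < s) (hs1 : s ≤ -1) :
    π * π ^ s ≤ ∫ u in 0..π / 2, u ^ s * sin u := by
  have hconst : ∫ _ in (0 : ℝ)..π / 2, 2 * π ^ s = π * π ^ s := by
    rw [intervalIntegral.integral_const, smul_eq_mul]; ring
  rw [← hconst]
  refine intervalIntegral.integral_mono_on_of_le_Ioo (by positivity) intervalIntegrable_const
    (intervalIntegrable_rpow_mul_sin hs2 le_rfl (by positivity)) fun u hu => ?_
  obtain ⟨hu0, hu⟩ := hu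
  calc 2 * π ^ s = 2 / π * π ^ (s + 1) := by rw [rpow_add_one pi_ne_zero]; field_simp
    _ ≤ 2 / π * u ^ (s + 1) := by
      gcongr 2 / π * ?_
      exact rpow_le_rpow_of_nonpos hu0 (by linarith [pi_pos]) (by linarith)
    _ = u ^ s * (2 / π * u) := by rw [rpow_add_one hu0.ne']; ring
    _ ≤ u ^ s * sin u := by gcongr; exact mul_le_sin hu0.le hu.le

theorem pi_sub_two_mul_rpow_le_integral_rpow_mul_sin {s T : ℝ} (hs2 : -2 < s) (hs1 : s ≤ -1)
    (hT : π ≤ T) : (π - 2) * π ^ s ≤ ∫ u in 0..T, u ^ s * sin u := by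
  have hint {a b : ℝ} (ha : 0 ≤ a) (hb : 0 ≤ b) := intervalIntegrable_rpow_mul_sin hs2 ha hb
  have hπ2 : 0 ≤ π / 2 := by positivity
  rw [← intervalIntegral.integral_add_adjacent_intervals
      ((hint le_rfl hπ2).trans (hint hπ2 pi_nonneg)) (hint pi_nonneg (pi_nonneg.trans hT)),
    ← intervalIntegral.integral_add_adjacent_intervals (hint le_rfl hπ2) (hint hπ2 pi_nonneg)]
  have hhead := pi_mul_rpow_le_integral_rpow_mul_sin hs2 hs1
  have hmid : 0 ≤ ∫ u in π / 2..π, u ^ s * sin u :=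
    intervalIntegral.integral_nonneg (by linarith [pi_pos]) fun u hu =>
      mul_nonneg (rpow_nonneg (hπ2.trans hu.1) _)
        (sin_nonneg_of_nonneg_of_le_pi (hπ2.trans hu.1) hu.2)
  have htail := neg_le_of_abs_le (abs_integral_rpow_mul_sin_le (s := s) (by linarith) pi_pos hT)
  linarith

theorem not_integrableOn_Ioi_of_const_mul_rpow_le {f : ℝ → ℝ} {a K s : ℝ} (ha : 0 < a)
    (hK : 0 < K) (hs : -1 ≤ s) (hf : ∀ w ∈ Ioi a, K * w ^ s ≤ f w) :
    ¬ IntegrableOn f (Ioi a) := by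
  intro hfi
  have hKw : IntegrableOn (fun w => K * w ^ s) (Ioi a) := by
    refine Integrable.mono' hfi (by fun_prop)
      ((ae_restrict_mem measurableSet_Ioi).mono fun w hw => ?_)
    rw [Real.norm_of_nonneg (mul_nonneg hK.le (rpow_nonneg (ha.trans hw).le _))]
    exact hf w hw
  rw [IntegrableOn, integrable_const_mul_iff hK.ne'.isUnit, ← IntegrableOn,
    integrableOn_Ioi_rpow_iff ha] at hKw
  linarith

theorem stmt15_general (α χ lo : ℝ) (h0 : 0 < α) (h1 : α < 1) (hχ : 0 < χ) (hlo : 0 < lo)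
    (c : ℝ → ℝ)
    (hc : ∀ w : ℝ, w ≠ 0 → c w = (χ / (2 * π ^ 2)) * |w| ^ (α - 1) *
      ∫ u in (0:ℝ)..(|w| / lo), u ^ (-α - 1) * Real.sin u) :
    ¬ Integrable c := by
  have hπ2 : 0 < π - 2 := by linarith [pi_gt_three]
  refine fun hci => not_integrableOn_Ioi_of_const_mul_rpow_le (a := π * lo) (s := α - 1)
    (K := χ / (2 * π ^ 2) * ((π - 2) * π ^ (-α - 1))) (by positivity) (by positivity)
    (by linarith) (fun w hw => ?_) hci.integrableOn
  have hw0 : 0 < w := (mul_pos pi_pos hlo).trans hw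
  have hF := pi_sub_two_mul_rpow_le_integral_rpow_mul_sin (s := -α - 1) (T := w / lo)
    (by linarith) (by linarith) ((le_div_iff₀ hlo).2 (le_of_lt hw))
  rw [hc w hw0.ne', abs_of_pos hw0, mul_right_comm]
  gcongr

/-- Let `α ∈ (0,1)`, `χ_α > 0`, `l_o > 0`, and let `c : ℝ → ℝ` be given by
`c(0) = χ_α/(2π²(1-α) l_o^{1-α})` and, for `w ≠ 0`,
`c(w) = (χ_α/(2π²)) |w|^{α-1} ∫_0^{|w|/l_o} u^{-α-1} sin u du`.
Then `c` is not Lebesgue integrable on `ℝ`. -/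
theorem stmt15 (α χ lo : ℝ) (h0 : 0 < α) (h1 : α < 1) (hχ : 0 < χ) (hlo : 0 < lo)
    (c : ℝ → ℝ)
    (hc0 : c 0 = χ / (2 * π ^ 2 * (1 - α) * lo ^ (1 - α)))
    (hc : ∀ w : ℝ, w ≠ 0 → c w = (χ / (2 * π ^ 2)) * |w| ^ (α - 1) *
      ∫ u in (0:ℝ)..(|w| / lo), u ^ (-α - 1) * Real.sin u) :
    ¬ Integrable c :=
  stmt15_general α χ lo h0 h1 hχ hlo c hc
end
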